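/- Let H = (V, E, ω) be a hypergraph in which every net has at least two pins, and let s, t ∈ V be distinct. Then the minimum capacity over all (s,t)-cuts of the Liu–Wong network N_W of H equals the minimum capacity over all (s,t)-cuts of the Lawler network N_L of H; both equal the minimum, over all sets S ⊆ V with s ∈ S and t ∉ S, of the cut weight of the bipartition (S, V∖S) of H. -/

import Mathlib

open scoped ENNReal

/-- Capacities of the Lawler network of a hypergraph: nodes are the hypernodes
(`Sum.inl`) together with two bridging nodes per net (`Sum.inr (e, false)` is `e′`,
`Sum.inr (e, true)` is `e″`). -/
noncomputable def lawlerCap {V E : Type} [DecidableEq V] [DecidableEq E]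
    (pins : E → Finset V) (ω : E → ℝ) :
    V ⊕ E × Bool → V ⊕ E × Bool → ℝ≥0∞
  | Sum.inl p, Sum.inr (e, false) => if p ∈ pins e then ⊤ else 0
  | Sum.inr (e, false), Sum.inr (e', true) => if e = e' then ENNReal.ofReal (ω e) else 0
  | Sum.inr (e, true), Sum.inl p => if p ∈ pins e then ⊤ else 0
  | _, _ => 0

/-- `f` is an `(s,t)`-flow for the capacity function `c`. -/
def IsFlow {ν : Type} [Fintype ν] (c : ν → ν → ℝ≥0∞) (s t : ν) (f : ν → ν → ℝ) : Prop :=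
  (∀ u v, (f u v : EReal) ≤ (c u v : EReal)) ∧
  (∀ u v, f u v = - f v u) ∧
  (∀ u, u ≠ s → u ≠ t → ∑ v, f u v = 0)

/-- The value of a flow. -/
noncomputable def flowValue {ν : Type} [Fintype ν] (f : ν → ν → ℝ) (s : ν) : ℝ :=
  ∑ v, f s v

/-- `f` is a maximum `(s,t)`-flow. -/
def IsMaxFlow {ν : Type} [Fintype ν] (c : ν → ν → ℝ≥0∞) (s t : ν) (f : ν → ν → ℝ) : Prop :=
  IsFlow c s t f ∧ ∀ g, IsFlow c s t g → flowValue g s ≤ flowValue f s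

/-- `(u,v)` is an edge of the residual network, i.e. `r_f(u,v) = c(u,v) - f(u,v) > 0`. -/
def ResidualEdge {ν : Type} (c : ν → ν → ℝ≥0∞) (f : ν → ν → ℝ) (u v : ν) : Prop :=
  (f u v : EReal) < (c u v : EReal)

open scoped Classical in
/-- The capacity of the `(s,t)`-cut `(S, 𝒱 ∖ S)`. -/
noncomputable def cutCap {ν : Type} [Fintype ν] (c : ν → ν → ℝ≥0∞) (S : Set ν) : ℝ≥0∞ :=
  ∑ u, ∑ v, if u ∈ S ∧ v ∉ S then c u v else 0

open scoped Classical in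
/-- The cut weight of the bipartition `(S, V ∖ S)` of a hypergraph: the total
weight of all nets split by `S`. -/
noncomputable def hypCutWeight {V E : Type} [Fintype E]
    (pins : E → Finset V) (ω : E → ℝ) (S : Set V) : ℝ :=
  ∑ e, if (∃ p ∈ pins e, p ∈ S) ∧ (∃ p ∈ pins e, p ∉ S) then ω e else 0

/-- Capacities of the Liu–Wong network of a hypergraph: bridging nodes only for nets
with at least three pins; every two-pin net `{u, w}` instead contributes two
antiparallel direct edges `(u, w)` and `(w, u)` of capacity `ω e` (capacities of
parallel edges arising from several two-pin nets are added). -/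
noncomputable def liuWongCap {V E : Type} [Fintype E] [DecidableEq V] [DecidableEq E]
    (pins : E → Finset V) (ω : E → ℝ) :
    V ⊕ {e : E // 3 ≤ (pins e).card} × Bool →
      V ⊕ {e : E // 3 ≤ (pins e).card} × Bool → ℝ≥0∞
  | Sum.inl u, Sum.inl w =>
      ∑ e ∈ Finset.univ.filter (fun e : E => (pins e).card = 2 ∧ pins e = {u, w}),
        ENNReal.ofReal (ω e)
  | Sum.inl p, Sum.inr (e, false) => if p ∈ pins e.1 then ⊤ else 0
  | Sum.inr (e, false), Sum.inr (e', true) => if e = e' then ENNReal.ofReal (ω e.1) else 0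
  | Sum.inr (e, true), Sum.inl p => if p ∈ pins e.1 then ⊤ else 0
  | _, _ => 0

/-!
Both networks are sums, over the nets, of small gadgets, and cut capacity is additive in the
capacity function, so everything reduces to one net at a time. If a net is split by the vertex
part `S` of a cut, some gadget edge of capacity at least its weight crosses the cut: a pin
edge of capacity `∞` unless `e′` is on the source side and `e″` on the sink side, and then the
bridging edge; for a direct two-pin net, the edge from its pin in `S` to its pin outside `S`.
Conversely, putting `e′` on the source side iff some pin is there, and `e″` iff all pins are,
yields a cut paying exactly the weight of each split net.
-/

open Finset

open scoped Classical

theorem sInf_separating_eq {ν V : Type} (ι : V → ν) (cap : Set ν → ℝ≥0∞)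
    (f : Set V → ℝ≥0∞) (lift : Set V → Set ν) (h_lift : ∀ S, ι ⁻¹' lift S = S)
    (h_le : ∀ 𝒮, f (ι ⁻¹' 𝒮) ≤ cap 𝒮) (h_lift_le : ∀ S, cap (lift S) ≤ f S) (s t : V) :
    sInf {x | ∃ 𝒮 : Set ν, ι s ∈ 𝒮 ∧ ι t ∉ 𝒮 ∧ cap 𝒮 = x} =
      sInf {x | ∃ S : Set V, s ∈ S ∧ t ∉ S ∧ f S = x} := by
  refine le_antisymm (le_sInf ?_) (le_sInf ?_)
  · rintro _ ⟨S, hs, ht, rfl⟩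
    refine sInf_le_of_le ⟨lift S, ?_, ?_, rfl⟩ (h_lift_le S) <;> rwa [← Set.mem_preimage, h_lift]
  · rintro _ ⟨𝒮, hs, ht, rfl⟩
    exact sInf_le_of_le ⟨ι ⁻¹' 𝒮, hs, ht, rfl⟩ (h_le 𝒮)

section Cut

variable {ν : Type} [Fintype ν]

theorem le_cutCap {c : ν → ν → ℝ≥0∞} {𝒮 : Set ν} {u v : ν} (hu : u ∈ 𝒮) (hv : v ∉ 𝒮) :
    c u v ≤ cutCap c 𝒮 :=
  calc c u v = if u ∈ 𝒮 ∧ v ∉ 𝒮 then c u v else 0 := (if_pos ⟨hu, hv⟩).symm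
    _ ≤ ∑ w, if u ∈ 𝒮 ∧ w ∉ 𝒮 then c u w else 0 :=
      single_le_sum (f := fun w => if u ∈ 𝒮 ∧ w ∉ 𝒮 then c u w else 0)
        (fun _ _ => zero_le) (mem_univ v)
    _ ≤ cutCap c 𝒮 :=
      single_le_sum (f := fun x => ∑ w, if x ∈ 𝒮 ∧ w ∉ 𝒮 then c x w else 0)
        (fun _ _ => zero_le) (mem_univ u)

theorem cutCap_eq_zero {c : ν → ν → ℝ≥0∞} {𝒮 : Set ν}
    (h : ∀ u v, u ∈ 𝒮 → v ∉ 𝒮 → c u v = 0) : cutCap c 𝒮 = 0 :=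
  sum_eq_zero fun u _ => sum_eq_zero fun v _ => ite_eq_right_iff.2 fun huv => h u v huv.1 huv.2

theorem cutCap_eq_of_support {c : ν → ν → ℝ≥0∞} {𝒮 : Set ν} {a b : ν}
    (h : ∀ u v, u ∈ 𝒮 → v ∉ 𝒮 → c u v ≠ 0 → u = a ∧ v = b) :
    cutCap c 𝒮 = if a ∈ 𝒮 ∧ b ∉ 𝒮 then c a b else 0 := by
  have hzero : ∀ u v, ¬(u = a ∧ v = b) → (if u ∈ 𝒮 ∧ v ∉ 𝒮 then c u v else 0) = 0 :=
    fun u v huv => ite_eq_right_iff.2 fun h' => by_contra fun hc => huv (h u v h'.1 h'.2 hc)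
  rw [cutCap, sum_eq_single a fun u _ hu => sum_eq_zero fun v _ => hzero u v (hu ·.1),
    sum_eq_single b fun v _ hv => hzero a v (hv ·.2)] <;> simp

theorem cutCap_sum {ι : Type} (s : Finset ι) (c : ι → ν → ν → ℝ≥0∞) (𝒮 : Set ν) :
    cutCap (∑ i ∈ s, c i) 𝒮 = ∑ i ∈ s, cutCap (c i) 𝒮 := by
  simp only [cutCap, Finset.sum_apply, ite_sum_zero]
  exact (sum_congr rfl fun _ _ => Finset.sum_comm).trans Finset.sum_comm

theorem cutCap_add (c d : ν → ν → ℝ≥0∞) (𝒮 : Set ν) :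
    cutCap (c + d) 𝒮 = cutCap c 𝒮 + cutCap d 𝒮 := by
  simp only [cutCap, Pi.add_apply, ite_add_zero, sum_add_distrib]

end Cut

section Gadgets

variable {V B : Type}

noncomputable def splitCost (S : Set V) (P : Finset V) (x : ℝ≥0∞) : ℝ≥0∞ :=
  if (∃ p ∈ P, p ∈ S) ∧ ∃ p ∈ P, p ∉ S then x else 0

theorem splitCost_eq_zero_of_card_le_one {P : Finset V} (hP : P.card ≤ 1) (S : Set V)
    (x : ℝ≥0∞) : splitCost S P x = 0 := by
  refine if_neg fun ⟨⟨p, hp, hpS⟩, q, hq, hqS⟩ => ?_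
  exact absurd (one_lt_card.2 ⟨p, hp, q, hq, fun hpq => hqS (hpq ▸ hpS)⟩) hP.not_gt

def bridgeCut (P : B → Finset V) (S : Set V) : Set (V ⊕ B × Bool)
  | Sum.inl v => v ∈ S
  | Sum.inr (b, false) => ∃ p ∈ P b, p ∈ S
  | Sum.inr (b, true) => ∀ p ∈ P b, p ∈ S

section
variable (P : B → Finset V) (S : Set V)

@[simp] theorem inl_mem_bridgeCut (v : V) : Sum.inl v ∈ bridgeCut P S ↔ v ∈ S := Iff.rfl

@[simp] theorem inr_false_mem_bridgeCut (b : B) :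
    Sum.inr (b, false) ∈ bridgeCut P S ↔ ∃ p ∈ P b, p ∈ S := Iff.rfl

@[simp] theorem inr_true_mem_bridgeCut (b : B) :
    Sum.inr (b, true) ∈ bridgeCut P S ↔ ∀ p ∈ P b, p ∈ S := Iff.rfl

end

variable [DecidableEq V]

def bridgeCap [DecidableEq B] (P : Finset V) (x : ℝ≥0∞) (b : B) :
    V ⊕ B × Bool → V ⊕ B × Bool → ℝ≥0∞
  | Sum.inl p, Sum.inr (b', false) => if b' = b ∧ p ∈ P then ⊤ else 0
  | Sum.inr (b', false), Sum.inr (b'', true) => if b' = b ∧ b'' = b then x else 0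
  | Sum.inr (b', true), Sum.inl p => if b' = b ∧ p ∈ P then ⊤ else 0
  | _, _ => 0

def pairCap {N : Type} (P : Finset V) (x : ℝ≥0∞) : V ⊕ N → V ⊕ N → ℝ≥0∞
  | Sum.inl u, Sum.inl w => if P = {u, w} then x else 0
  | _, _ => 0

variable [Fintype V]

theorem splitCost_le_cutCap_bridgeCap [Fintype B] [DecidableEq B] (P : Finset V) (x : ℝ≥0∞)
    (b : B) (𝒮 : Set (V ⊕ B × Bool)) :
    splitCost (Sum.inl ⁻¹' 𝒮) P x ≤ cutCap (bridgeCap P x b) 𝒮 := by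
  unfold splitCost
  split_ifs with h
  swap
  · exact zero_le
  obtain ⟨⟨p, hp, hpS⟩, q, hq, hqS⟩ := h
  by_cases h₁ : Sum.inr (b, false) ∈ 𝒮
  · by_cases h₂ : Sum.inr (b, true) ∈ 𝒮
    · calc x ≤ bridgeCap P x b (Sum.inr (b, true)) (Sum.inl q) := by simp [bridgeCap, hq]
        _ ≤ _ := le_cutCap h₂ hqS
    · calc x = bridgeCap P x b (Sum.inr (b, false)) (Sum.inr (b, true)) := by simp [bridgeCap]
        _ ≤ _ := le_cutCap h₁ h₂
  · calc x ≤ bridgeCap P x b (Sum.inl p) (Sum.inr (b, false)) := by simp [bridgeCap, hp]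
      _ ≤ _ := le_cutCap hpS h₁

theorem cutCap_bridgeCap_bridgeCut [Fintype B] [DecidableEq B] (P : B → Finset V) (x : ℝ≥0∞)
    (b : B) (S : Set V) : cutCap (bridgeCap (P b) x b) (bridgeCut P S) = splitCost S (P b) x := by
  rw [cutCap_eq_of_support (a := Sum.inr (b, false)) (b := Sum.inr (b, true))]
  · simp [bridgeCap, splitCost]
  · rintro (p | ⟨b', _ | _⟩) (q | ⟨b'', _ | _⟩) hu hv hc <;> simp_all [bridgeCap]

theorem cutCap_pairCap {N : Type} [Fintype N] {P : Finset V} (hP : P.card = 2) (x : ℝ≥0∞)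
    (𝒮 : Set (V ⊕ N)) : cutCap (pairCap P x) 𝒮 = splitCost (Sum.inl ⁻¹' 𝒮) P x := by
  unfold splitCost
  split_ifs with h
  · obtain ⟨⟨p, hp, hpS : Sum.inl p ∈ 𝒮⟩, q, hq, hqS : Sum.inl q ∉ 𝒮⟩ := h
    have hpq : p ≠ q := fun hpq => hqS (hpq ▸ hpS)
    obtain rfl : {p, q} = P :=
      eq_of_subset_of_card_le (insert_subset hp (singleton_subset_iff.2 hq))
        (by rw [hP, card_pair hpq])
    rw [cutCap_eq_of_support (a := Sum.inl p) (b := Sum.inl q)]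
    · simp [pairCap, hpS, hqS]
    · rintro (u | _) (w | _) hu hw hc <;>
        simp only [pairCap, ne_eq, ite_eq_right_iff, Classical.not_imp, not_true_eq_false] at hc
      have hu' : u ∈ ({p, q} : Finset V) := by simp [hc.1]
      have hw' : w ∈ ({p, q} : Finset V) := by simp [hc.1]
      simp only [mem_insert, mem_singleton] at hu' hw'
      grind
  · refine cutCap_eq_zero ?_
    rintro (u | _) (w | _) hu hw <;> simp only [pairCap]
    refine if_neg ?_
    rintro rfl
    exact h ⟨⟨u, by simp, hu⟩, w, by simp, hw⟩

end Gadgets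

section Networks

variable {V E : Type} [Fintype E] (pins : E → Finset V) (ω : E → ℝ)

theorem ofReal_hypCutWeight (hω : ∀ e, 0 ≤ ω e) (S : Set V) :
    ENNReal.ofReal (hypCutWeight pins ω S) = ∑ e, splitCost S (pins e) (ENNReal.ofReal (ω e)) := by
  rw [hypCutWeight, ENNReal.ofReal_sum_of_nonneg fun e _ => by split_ifs <;> simp [hω e]]
  exact sum_congr rfl fun e _ => (apply_ite ENNReal.ofReal _ _ _).trans (by simp [splitCost])

theorem sum_splitCost_eq_sum_bridged_add_sum_twoPin (S : Set V) (x : E → ℝ≥0∞) :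
    ∑ e, splitCost S (pins e) (x e) =
      ∑ b : {e // 3 ≤ (pins e).card}, splitCost S (pins b.1) (x b.1) +
        ∑ e ∈ univ.filter (fun e => (pins e).card = 2), splitCost S (pins e) (x e) := by
  rw [← sum_subtype (univ.filter fun e => 3 ≤ (pins e).card) (by simp)
    (fun e => splitCost S (pins e) (x e)), sum_filter, sum_filter, ← sum_add_distrib]
  refine sum_congr rfl fun e _ => ?_
  by_cases h₂ : (pins e).card = 2
  · simp [h₂]
  by_cases h₃ : 3 ≤ (pins e).card
  · simp [h₂, h₃]
  simp [h₂, h₃, splitCost_eq_zero_of_card_le_one (by omega : (pins e).card ≤ 1)]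

variable [DecidableEq V] [DecidableEq E]

theorem lawlerCap_eq_sum_bridgeCap :
    lawlerCap pins ω = ∑ e, bridgeCap (pins e) (ENNReal.ofReal (ω e)) e := by
  funext u v
  simp only [Finset.sum_apply]
  rcases u with p | ⟨e, _ | _⟩ <;> rcases v with q | ⟨e', _ | _⟩ <;>
    simp [lawlerCap, bridgeCap, ite_and, eq_comm]

theorem liuWongCap_eq_sum_bridgeCap_add_sum_pairCap :
    liuWongCap pins ω = ∑ b, bridgeCap (pins b.1) (ENNReal.ofReal (ω b.1)) b +
      ∑ e ∈ univ.filter (fun e => (pins e).card = 2), pairCap (pins e) (ENNReal.ofReal (ω e)) := by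
  funext u v
  simp only [Pi.add_apply, Finset.sum_apply]
  rcases u with p | ⟨e, _ | _⟩ <;> rcases v with q | ⟨e', _ | _⟩ <;>
    simp [liuWongCap, bridgeCap, pairCap, ite_and, eq_comm, Finset.sum_filter]

variable [Fintype V]

theorem ofReal_hypCutWeight_le_cutCap_lawlerCap (hω : ∀ e, 0 ≤ ω e) (𝒮 : Set (V ⊕ E × Bool)) :
    ENNReal.ofReal (hypCutWeight pins ω (Sum.inl ⁻¹' 𝒮)) ≤ cutCap (lawlerCap pins ω) 𝒮 := by
  rw [ofReal_hypCutWeight pins ω hω, lawlerCap_eq_sum_bridgeCap, cutCap_sum]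
  exact sum_le_sum fun e _ => splitCost_le_cutCap_bridgeCap _ _ e 𝒮

theorem cutCap_lawlerCap_bridgeCut (hω : ∀ e, 0 ≤ ω e) (S : Set V) :
    cutCap (lawlerCap pins ω) (bridgeCut pins S) = ENNReal.ofReal (hypCutWeight pins ω S) := by
  rw [ofReal_hypCutWeight pins ω hω, lawlerCap_eq_sum_bridgeCap, cutCap_sum]
  exact sum_congr rfl fun e _ => cutCap_bridgeCap_bridgeCut pins _ e S

theorem ofReal_hypCutWeight_le_cutCap_liuWongCap (hω : ∀ e, 0 ≤ ω e)
    (𝒮 : Set (V ⊕ {e // 3 ≤ (pins e).card} × Bool)) :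
    ENNReal.ofReal (hypCutWeight pins ω (Sum.inl ⁻¹' 𝒮)) ≤ cutCap (liuWongCap pins ω) 𝒮 := by
  rw [ofReal_hypCutWeight pins ω hω, sum_splitCost_eq_sum_bridged_add_sum_twoPin,
    liuWongCap_eq_sum_bridgeCap_add_sum_pairCap, cutCap_add, cutCap_sum, cutCap_sum]
  exact add_le_add (sum_le_sum fun b _ => splitCost_le_cutCap_bridgeCap _ _ b 𝒮)
    (sum_le_sum fun e he => (cutCap_pairCap (mem_filter.1 he).2 _ 𝒮).ge)

theorem cutCap_liuWongCap_bridgeCut (hω : ∀ e, 0 ≤ ω e) (S : Set V) :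
    cutCap (liuWongCap pins ω) (bridgeCut (fun b => pins b.1) S) =
      ENNReal.ofReal (hypCutWeight pins ω S) := by
  rw [ofReal_hypCutWeight pins ω hω, sum_splitCost_eq_sum_bridged_add_sum_twoPin,
    liuWongCap_eq_sum_bridgeCap_add_sum_pairCap, cutCap_add, cutCap_sum, cutCap_sum]
  exact congrArg₂ (· + ·) (sum_congr rfl fun b _ => cutCap_bridgeCap_bridgeCut _ _ b S)
    (sum_congr rfl fun e he => cutCap_pairCap (mem_filter.1 he).2 _ _)

end Networks

theorem liu_wong_min_cut_eq_lawler_min_cut_general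
    {V E : Type} [Fintype V] [Fintype E] [DecidableEq V] [DecidableEq E]
    (pins : E → Finset V) (ω : E → ℝ) (hω : ∀ e, 0 < ω e)
    (s t : V) :
    sInf {x : ℝ≥0∞ | ∃ 𝒮 : Set (V ⊕ {e : E // 3 ≤ (pins e).card} × Bool),
        Sum.inl s ∈ 𝒮 ∧ Sum.inl t ∉ 𝒮 ∧ cutCap (liuWongCap pins ω) 𝒮 = x} =
      sInf {x : ℝ≥0∞ | ∃ 𝒮 : Set (V ⊕ E × Bool),
        Sum.inl s ∈ 𝒮 ∧ Sum.inl t ∉ 𝒮 ∧ cutCap (lawlerCap pins ω) 𝒮 = x} ∧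
    sInf {x : ℝ≥0∞ | ∃ 𝒮 : Set (V ⊕ E × Bool),
        Sum.inl s ∈ 𝒮 ∧ Sum.inl t ∉ 𝒮 ∧ cutCap (lawlerCap pins ω) 𝒮 = x} =
      sInf {x : ℝ≥0∞ | ∃ S : Set V,
        s ∈ S ∧ t ∉ S ∧ ENNReal.ofReal (hypCutWeight pins ω S) = x} := by
  have hω₀ : ∀ e, 0 ≤ ω e := fun e => (hω e).le
  have lawler := sInf_separating_eq Sum.inl (cutCap (lawlerCap pins ω))
    (fun S => ENNReal.ofReal (hypCutWeight pins ω S)) (bridgeCut pins) (fun _ => rfl)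
    (ofReal_hypCutWeight_le_cutCap_lawlerCap pins ω hω₀)
    (fun S => (cutCap_lawlerCap_bridgeCut pins ω hω₀ S).le) s t
  have liuWong := sInf_separating_eq Sum.inl (cutCap (liuWongCap pins ω))
    (fun S => ENNReal.ofReal (hypCutWeight pins ω S)) (bridgeCut fun b => pins b.1)
    (fun _ => rfl) (ofReal_hypCutWeight_le_cutCap_liuWongCap pins ω hω₀)
    (fun S => (cutCap_liuWongCap_bridgeCut pins ω hω₀ S).le) s t
  exact ⟨liuWong.trans lawler.symm, lawler⟩

/-- For a hypergraph in which every net has at least two pins, the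
minimum `(s,t)`-cut capacities of the Liu–Wong network and of the Lawler network agree,
and both equal the minimum cut weight over all bipartitions `(S, V ∖ S)` of the
hypergraph with `s ∈ S` and `t ∉ S`. -/
theorem liu_wong_min_cut_eq_lawler_min_cut
    {V E : Type} [Fintype V] [Fintype E] [DecidableEq V] [DecidableEq E]
    (pins : E → Finset V) (ω : E → ℝ) (hω : ∀ e, 0 < ω e)
    (hpins : ∀ e, 2 ≤ (pins e).card)
    (s t : V) (hst : s ≠ t) :
    sInf {x : ℝ≥0∞ | ∃ 𝒮 : Set (V ⊕ {e : E // 3 ≤ (pins e).card} × Bool),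
        Sum.inl s ∈ 𝒮 ∧ Sum.inl t ∉ 𝒮 ∧ cutCap (liuWongCap pins ω) 𝒮 = x} =
      sInf {x : ℝ≥0∞ | ∃ 𝒮 : Set (V ⊕ E × Bool),
        Sum.inl s ∈ 𝒮 ∧ Sum.inl t ∉ 𝒮 ∧ cutCap (lawlerCap pins ω) 𝒮 = x} ∧
    sInf {x : ℝ≥0∞ | ∃ 𝒮 : Set (V ⊕ E × Bool),
        Sum.inl s ∈ 𝒮 ∧ Sum.inl t ∉ 𝒮 ∧ cutCap (lawlerCap pins ω) 𝒮 = x} =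
      sInf {x : ℝ≥0∞ | ∃ S : Set V,
        s ∈ S ∧ t ∉ S ∧ ENNReal.ofReal (hypCutWeight pins ω S) = x} :=
  liu_wong_min_cut_eq_lawler_min_cut_general pins ω hω s t
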